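/- arXiv:1105.1636 — 3 statements merged into one kernel-verified Lean document; each statement's English description precedes it below -/
import Mathlib

section
/- Let R = (β_1,…,β_l) be a route in B_0 such that the color of the initial arrow β_1 and the color of the terminal arrow β_l are both equal to a, and no arrow β_j with 1 < j < l has color a. Then there are exactly two indices j ∈ {1,…,l} such that the color of β_j is adjacent to a (i.e., exactly two arrows of R have color b with b ∼ a). -/
/-- The arrows (source, color, target) of the crystal graph of the
Kirillov–Reshetikhin crystal `B^{1,1}` of type `E6^(1)`. -/
def arrows : List (ℕ × ℕ × ℕ) :=
  [(1,1,2),(2,2,3),(3,3,4),(4,4,5),(4,6,7),(5,5,6),(5,6,8),(6,6,9),(7,4,8),(8,5,9),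
   (8,3,10),(9,3,11),(10,5,11),(10,2,13),(11,4,12),(11,2,14),(12,2,15),(13,5,14),
   (13,1,18),(14,4,15),(14,1,19),(15,3,16),(15,1,20),(16,6,17),(16,1,21),(17,1,22),
   (18,5,19),(19,4,20),(20,3,21),(21,6,22),(21,2,23),(22,2,24),(23,6,24),(24,3,25),
   (25,4,26),(26,5,27),(17,0,1),(22,0,2),(24,0,3),(25,0,4),(26,0,5),(27,0,6)]

/-- Adjacency in the `E6` Dynkin diagram. -/
def adjPairs : List (ℕ × ℕ) :=
  [(1,2),(2,1),(2,3),(3,2),(3,4),(4,3),(4,5),(5,4),(3,6),(6,3)]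

def Adj (a b : ℕ) : Prop := (a, b) ∈ adjPairs

instance (a b : ℕ) : Decidable (Adj a b) := by unfold Adj; infer_instance

/-- The Cartan matrix of `E6`. -/
def Cmat (a b : ℕ) : ℤ := if a = b then 2 else if Adj a b then -1 else 0

/-- A route in `B_0`: a list of consecutive arrows of nonzero color. -/
def IsRoute (R : List (ℕ × ℕ × ℕ)) : Prop :=
  (∀ β ∈ R, β ∈ arrows ∧ β.2.1 ≠ 0) ∧ R.Chain' (fun β β' => β.2.2 = β'.1)


/-- `φ a v` : 1 if there is an `a`-arrow out of `v`, −1 if into `v`, 0 otherwise. -/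
def phi (a v : ℕ) : ℤ :=
  if arrows.any (fun β => β.2.1 == a && β.1 == v) then 1
  else if arrows.any (fun β => β.2.1 == a && β.2.2 == v) then -1 else 0

lemma colors_mem : ∀ β ∈ arrows, β.2.1 ≠ 0 → β.2.1 ∈ [1,2,3,4,5,6] := by decide

set_option maxHeartbeats 1600000 in
lemma L1 : ∀ a ∈ [1,2,3,4,5,6], ∀ β ∈ arrows, β.2.1 ≠ 0 →
    phi a β.1 - phi a β.2.2 = Cmat a β.2.1 := by decide

set_option maxHeartbeats 1600000 in
lemma L2 : ∀ β ∈ arrows, β.2.1 ≠ 0 → phi β.2.1 β.1 = 1 ∧ phi β.2.1 β.2.2 = -1 := by decide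

lemma adjPairs_swap : ∀ p ∈ adjPairs, (p.2, p.1) ∈ adjPairs := by decide

lemma adjPairs_ne : ∀ p ∈ adjPairs, p.1 ≠ p.2 := by decide

lemma adj_symm (a b : ℕ) : Adj a b ↔ Adj b a :=
  ⟨fun h => adjPairs_swap (a, b) h, fun h => adjPairs_swap (b, a) h⟩

lemma adj_irrefl (a : ℕ) : ¬ Adj a a := fun h => adjPairs_ne (a, a) h rfl

lemma tele (a : ℕ) (ha : a ∈ [1,2,3,4,5,6]) :
    ∀ (L : List (ℕ × ℕ × ℕ)) (h : L ≠ []),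
      (∀ β ∈ L, β ∈ arrows ∧ β.2.1 ≠ 0) →
      L.Chain' (fun β β' => β.2.2 = β'.1) →
      (L.map (fun β => Cmat a β.2.1)).sum = phi a (L.head h).1 - phi a (L.getLast h).2.2 := by
  intro L
  induction L with
  | nil => intro h; exact absurd rfl h
  | cons β t ih =>
    intro h hmem hch
    cases t with
    | nil =>
      simp only [List.map_cons, List.map_nil, List.sum_cons, List.sum_nil, add_zero,
        List.head_cons, List.getLast_singleton]
      exact (L1 a ha β (hmem β (by simp)).1 (hmem β (by simp)).2).symm
    | cons β' t' =>
      have hch2 := List.isChain_cons_cons.mp hch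
      have hrest := ih (by simp) (fun x hx => hmem x (List.mem_cons_of_mem _ hx)) hch2.2
      have hhead : ((β' :: t').head (by simp)) = β' := rfl
      have hL1 := L1 a ha β (hmem β (by simp)).1 (hmem β (by simp)).2
      have hlast : (β :: β' :: t').getLast h = (β' :: t').getLast (by simp) :=
        List.getLast_cons (by simp)
      rw [List.map_cons, List.sum_cons, hrest, hhead, hlast, List.head_cons, ← hch2.1]
      linarith

lemma sum_mid (a : ℕ) : ∀ (M : List (ℕ × ℕ × ℕ)), (∀ β ∈ M, β.2.1 ≠ a) →
    (M.map (fun β => Cmat a β.2.1)).sum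
      = -(M.countP (fun β => decide (Adj β.2.1 a)) : ℤ) := by
  intro M
  induction M with
  | nil => simp
  | cons β t ih =>
    intro hM
    have hβ : β.2.1 ≠ a := hM β (by simp)
    have h1 : Cmat a β.2.1 = -(if Adj β.2.1 a then 1 else 0) := by
      rw [Cmat, if_neg (fun h => hβ h.symm)]
      by_cases h : Adj β.2.1 a
      · rw [if_pos ((adj_symm a β.2.1).mpr h), if_pos h]
      · rw [if_neg (fun h' => h ((adj_symm a β.2.1).mp h')), if_neg h]; rfl
    rw [List.map_cons, List.sum_cons, List.countP_cons,
      ih (fun x hx => hM x (List.mem_cons_of_mem _ hx)), h1]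
    by_cases h : Adj β.2.1 a
    · simp [h]
    · simp [h]


/-- Lemma 2.2(1): if the initial and terminal arrows of a route have the same
color `a` and no intermediate arrow has color `a`, then exactly two arrows of
the route have a color adjacent to `a`. -/
theorem stmt0 (R : List (ℕ × ℕ × ℕ)) (a : ℕ) (hR : IsRoute R)
    (hlen : 2 ≤ R.length) (hne : R ≠ [])
    (hfirst : (R.head hne).2.1 = a)
    (hlast : (R.getLast hne).2.1 = a)
    (hmid : ∀ j (hj : j < R.length), 0 < j → j < R.length - 1 →
      (R.get ⟨j, hj⟩).2.1 ≠ a) :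
    R.countP (fun β => decide (Adj β.2.1 a)) = 2 := by
  obtain ⟨x, t, rfl⟩ : ∃ x t, R = x :: t := by
    cases R with
    | nil => exact absurd rfl hne
    | cons x t => exact ⟨x, t, rfl⟩
  have htne : t ≠ [] := by
    intro h; subst h; simp at hlen
  obtain ⟨M, c, hMc⟩ : ∃ M c, t = M ++ [c] :=
    ⟨t.dropLast, t.getLast htne, (List.dropLast_append_getLast htne).symm⟩
  have hx : x.2.1 = a := hfirst
  have hc : c.2.1 = a := by
    have h : (x :: t).getLast hne = c := by
      rw [List.getLast_cons htne]
      subst hMc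
      exact List.getLast_append _
    rw [← h]; exact hlast
  have hMne : ∀ β ∈ M, β.2.1 ≠ a := by
    intro β hβ
    obtain ⟨j, hget⟩ := List.mem_iff_get.mp hβ
    have hj' : (j : ℕ) + 1 < (x :: t).length := by
      simp [hMc]
    have hget2 : (x :: t).get ⟨(j : ℕ) + 1, hj'⟩ = β := by
      rw [← hget]
      show (x :: t)[(j : ℕ) + 1] = M[(j : ℕ)]
      simp only [List.getElem_cons_succ, hMc]
      exact List.getElem_append_left j.isLt
    have hm := hmid ((j : ℕ) + 1) hj' (Nat.succ_pos _) (by simp [hMc]; try omega)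
    rw [hget2] at hm
    exact hm
  have hmemx : x ∈ arrows ∧ x.2.1 ≠ 0 := hR.1 x (by simp)
  have hmemc : c ∈ arrows ∧ c.2.1 ≠ 0 := hR.1 c (by simp [hMc])
  have ha6 : a ∈ [1,2,3,4,5,6] := by
    have h := colors_mem x hmemx.1 hmemx.2
    rwa [hx] at h
  have htel := tele a ha6 (x :: t) hne hR.1 hR.2
  have hhead : ((x :: t).head hne) = x := rfl
  have hgl : (x :: t).getLast hne = c := by
    rw [List.getLast_cons htne]; subst hMc; exact List.getLast_append _
  rw [hhead, hgl] at htel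
  have hphix : phi a x.1 = 1 := by
    have h := (L2 x hmemx.1 hmemx.2).1; rwa [hx] at h
  have hphic : phi a c.2.2 = -1 := by
    have h := (L2 c hmemc.1 hmemc.2).2; rwa [hc] at h
  rw [hphix, hphic] at htel
  have hsum : ((x :: t).map (fun β => Cmat a β.2.1)).sum
      = 4 - (M.countP (fun β => decide (Adj β.2.1 a)) : ℤ) := by
    rw [hMc, List.map_cons, List.map_append, List.sum_cons, List.sum_append,
      sum_mid a M hMne]
    have h2 : Cmat a x.2.1 = 2 := by rw [Cmat, hx, if_pos rfl]
    have h3 : Cmat a c.2.1 = 2 := by rw [Cmat, hc, if_pos rfl]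
    simp [h2, h3]
    ring
  rw [hsum] at htel
  have hk : (M.countP (fun β => decide (Adj β.2.1 a)) : ℤ) = 2 := by linarith
  have hkn : M.countP (fun β => decide (Adj β.2.1 a)) = 2 := by exact_mod_cast hk
  have hax : ¬ Adj x.2.1 a := by rw [hx]; exact adj_irrefl a
  have hac : ¬ Adj c.2.1 a := by rw [hc]; exact adj_irrefl a
  rw [hMc, List.countP_cons, List.countP_append, hkn]
  simp [hax, hac, List.countP_cons]
end

section
/- Let R be a route in B_0 whose initial arrow has source the vertex 1, and let (a_1,…,a_l) be the colors of its arrows from the initial arrow to the terminal one. Then Σ_{j=1}^{l−1} C_{a_j a_l} = δ_{a_l,1} − 1. -/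
/-!
Give each vertex `b` of `B_0` its weight, recorded by the pairings `⟨wt b, α_c^∨⟩`.
An arrow of color `a` lowers the weight by `α_a`, so along a route the sum
`Σ_j C_{a_j c}` telescopes to `⟨wt (start) - wt (end), α_c^∨⟩`. Apply this to the whole
route with `c = a_l`: the start is `1`, of weight `Λ_1`, and since `B^{1,1}` is minuscule
the source `b` of the last arrow has `⟨wt b, α_{a_l}^∨⟩ = φ_{a_l}(b) = 1`.
-/

theorem List.IsChain.sum_map_eq_sub {α V : Type*} {src tgt : α → V} {w : V → ℤ} {d : α → ℤ}
    {L : List α} (hchain : L.IsChain (fun β β' => tgt β = src β')) (hL : L ≠ [])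
    (hd : ∀ β ∈ L, d β = w (src β) - w (tgt β)) :
    (L.map d).sum = w (src (L.head hL)) - w (tgt (L.getLast hL)) := by
  induction L with
  | nil => exact absurd rfl hL
  | cons β L ih =>
    cases L with
    | nil => simp [hd β List.mem_cons_self]
    | cons β' L =>
      rw [List.isChain_cons_cons] at hchain
      have ih := ih hchain.2 (List.cons_ne_nil _ _) (fun x hx => hd x (List.mem_cons_of_mem _ hx))
      simp only [List.map_cons, List.sum_cons, List.head_cons, List.getLast_cons_cons] at ih ⊢
      rw [ih, hd β List.mem_cons_self, hchain.1]
      ring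

/-- Row `b - 1` lists the coordinates of the weight of the vertex `b` in the basis of
fundamental weights `Λ_1, …, Λ_6`. -/
def weightTable : List (List ℤ) :=
  [[1,0,0,0,0,0], [-1,1,0,0,0,0], [0,-1,1,0,0,0], [0,0,-1,1,0,1], [0,0,0,-1,1,1],
   [0,0,0,0,-1,1], [0,0,0,1,0,-1], [0,0,1,-1,1,-1], [0,0,1,0,-1,-1], [0,1,-1,0,1,0],
   [0,1,-1,1,-1,0], [0,1,0,-1,0,0], [1,-1,0,0,1,0], [1,-1,0,1,-1,0], [1,-1,1,-1,0,0],
   [1,0,-1,0,0,1], [1,0,0,0,0,-1], [-1,0,0,0,1,0], [-1,0,0,1,-1,0], [-1,0,1,-1,0,0],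
   [-1,1,-1,0,0,1], [-1,1,0,0,0,-1], [0,-1,0,0,0,1], [0,-1,1,0,0,-1], [0,0,-1,1,0,0],
   [0,0,0,-1,1,0], [0,0,0,0,-1,0]]

/-- `weight b c = ⟨wt b, α_c^∨⟩` for a vertex `b` and a color `1 ≤ c ≤ 6`. -/
def weight (b c : ℕ) : ℤ := (weightTable.getD (b - 1) []).getD (c - 1) 0

theorem weight_one : ∀ c ∈ Finset.Icc 1 6, weight 1 c = if c = 1 then 1 else 0 := by
  decide

theorem weight_target_eq_sub_cartan : ∀ β ∈ arrows, β.2.1 ≠ 0 → ∀ c ∈ Finset.Icc 1 6,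
    weight β.2.2 c = weight β.1 c - Cmat β.2.1 c := by
  decide

theorem weight_source_color_eq_one : ∀ β ∈ arrows, β.2.1 ≠ 0 → weight β.1 β.2.1 = 1 := by
  decide

theorem color_mem_Icc : ∀ β ∈ arrows, β.2.1 ≠ 0 → β.2.1 ∈ Finset.Icc 1 6 := by
  decide

theorem IsRoute.sum_cartan_eq_weight_sub {R : List (ℕ × ℕ × ℕ)} (hR : IsRoute R)
    (hne : R ≠ []) {c : ℕ} (hc : c ∈ Finset.Icc 1 6) :
    (R.map (fun β => Cmat β.2.1 c)).sum
      = weight (R.head hne).1 c - weight (R.getLast hne).2.2 c :=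
  hR.2.sum_map_eq_sub (w := fun b => weight b c) hne fun β hβ => by
    rw [weight_target_eq_sub_cartan β (hR.1 β hβ).1 (hR.1 β hβ).2 c hc]
    ring

/-- Lemma 2.2(2): for a route starting at vertex `1` with colors `(a_1, …, a_l)`,
`Σ_{j=1}^{l-1} C_{a_j a_l} = δ_{a_l,1} − 1`. -/
theorem stmt1 (R : List (ℕ × ℕ × ℕ)) (hR : IsRoute R) (hne : R ≠ [])
    (hstart : (R.head hne).1 = 1) :
    ((R.dropLast).map (fun β => Cmat β.2.1 (R.getLast hne).2.1)).sum
      = (if (R.getLast hne).2.1 = 1 then (1 : ℤ) else 0) - 1 := by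
  set γ := R.getLast hne
  obtain ⟨hγ, hγ0⟩ := hR.1 γ (List.getLast_mem hne)
  have hc := color_mem_Icc γ hγ hγ0
  have htotal := hR.sum_cartan_eq_weight_sub hne hc
  have hsplit : (R.map (fun β => Cmat β.2.1 γ.2.1)).sum
      = (R.dropLast.map (fun β => Cmat β.2.1 γ.2.1)).sum + Cmat γ.2.1 γ.2.1 := by
    conv_lhs => rw [← List.dropLast_append_getLast hne]
    simp [γ]
  have hdiag : Cmat γ.2.1 γ.2.1 = 2 := if_pos rfl
  have hend := weight_target_eq_sub_cartan γ hγ hγ0 γ.2.1 hc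
  rw [hsplit, hstart, weight_one _ hc, hend, weight_source_color_eq_one γ hγ hγ0, hdiag]
    at htotal
  linarith
end

section
/- Let R be a route in B_0 with colors (a_1,…,a_l), and let v_i denote the source of the arrow of color a_i (i = 1,…,l). Suppose a_1 ∼ a_l and a_i ≁ a_l for all i = 2,…,l−1. Then for every i = 2,…,l−1 there exists an arrow of color a_l in B_0 with source v_i. -/
theorem exists_arrow_of_not_adj {b a b' c t : ℕ} (hβ : (b, a, b') ∈ arrows) (hγ : (b', c, t) ∈ arrows)
    (ha : a ≠ 0) (hc : c ≠ 0) (hac : ¬ Adj a c) : ∃ t', (b, c, t') ∈ arrows := by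
  have key : ∀ β ∈ arrows, ∀ γ ∈ arrows, β.2.2 = γ.1 → β.2.1 ≠ 0 → γ.2.1 ≠ 0 →
      ¬ Adj β.2.1 γ.2.1 → ∃ δ ∈ arrows, δ.1 = β.1 ∧ δ.2.1 = γ.2.1 := by
    decide
  obtain ⟨⟨_, _, t'⟩, hδ, rfl, rfl⟩ := key _ hβ _ hγ rfl ha hc hac
  exact ⟨t', hδ⟩

theorem IsRoute.tail {R : List (ℕ × ℕ × ℕ)} (hR : IsRoute R) : IsRoute R.tail :=
  ⟨fun β hβ => hR.1 β (List.mem_of_mem_tail hβ), hR.2.tail⟩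

theorem IsRoute.exists_arrow_of_forall_not_adj {R : List (ℕ × ℕ × ℕ)} (hR : IsRoute R)
    (hne : R ≠ []) (hnadj : ∀ β ∈ R.dropLast, ¬ Adj β.2.1 (R.getLast hne).2.1) :
    ∀ β ∈ R, ∃ t, (β.1, (R.getLast hne).2.1, t) ∈ arrows := by
  induction R with
  | nil => contradiction
  | cons β R ih =>
    rcases R with _ | ⟨β', R⟩
    · simp only [List.mem_singleton, forall_eq, List.getLast_singleton]
      exact ⟨β.2.2, (hR.1 β List.mem_cons_self).1⟩
    have hlast : (β :: β' :: R).getLast hne = (β' :: R).getLast (List.cons_ne_nil _ _) :=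
      List.getLast_cons (List.cons_ne_nil _ _)
    rw [hlast, List.dropLast_cons_cons, List.forall_mem_cons] at hnadj
    rw [hlast]
    have ih := ih hR.tail (List.cons_ne_nil _ _) hnadj.2
    rintro γ (_ | ⟨_, hγ⟩)
    · obtain ⟨t, ht⟩ := ih β' List.mem_cons_self
      have hββ' : β.2.2 = β'.1 := (List.isChain_cons_cons.mp hR.2).1
      have hc : ((β' :: R).getLast (List.cons_ne_nil _ _)).2.1 ≠ 0 :=
        (hR.tail.1 _ (List.getLast_mem _)).2
      exact exists_arrow_of_not_adj (hR.1 β List.mem_cons_self).1 (hββ' ▸ ht)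
        (hR.1 β List.mem_cons_self).2 hc hnadj.1
    · exact ih γ hγ

theorem stmt3_general (R : List (ℕ × ℕ × ℕ)) (hR : IsRoute R) (hne : R ≠ [])
    (hmid : ∀ j (hj : j < R.length), 0 < j → j < R.length - 1 →
      ¬ Adj (R.get ⟨j, hj⟩).2.1 (R.getLast hne).2.1) :
    ∀ j (hj : j < R.length), 0 < j → j < R.length - 1 →
      ∃ t, ((R.get ⟨j, hj⟩).1, (R.getLast hne).2.1, t) ∈ arrows := by
  intro j hj hj₀ hj₁
  have htail : R.tail ≠ [] := by
    rw [← List.length_pos_iff, List.length_tail]; omega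
  rw [← List.getLast_tail htail]
  refine hR.tail.exists_arrow_of_forall_not_adj htail ?_ _ ?_
  · intro β hβ
    obtain ⟨i, hi, rfl⟩ := List.mem_iff_getElem.mp hβ
    simp only [List.length_dropLast, List.length_tail] at hi
    rw [List.getElem_dropLast, List.getElem_tail, List.getLast_tail htail]
    exact hmid (i + 1) _ (by omega) (by omega)
  · have hj' : j - 1 < R.tail.length := by rw [List.length_tail]; omega
    have hget : R.tail[j - 1] = R.get ⟨j, hj⟩ := by
      simp only [List.getElem_tail, Nat.sub_add_cancel hj₀, List.get_eq_getElem]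
    exact hget ▸ List.getElem_mem hj'

/-- Lemma 2.2(4): if a route has colors `(a_1, …, a_l)` with `a_1 ∼ a_l` and
`a_i ≁ a_l` for `i = 2, …, l−1`, then from the source `v_i` of each intermediate
arrow there is an arrow of color `a_l`. -/
theorem stmt3 (R : List (ℕ × ℕ × ℕ)) (hR : IsRoute R) (hne : R ≠ [])
    (hadj : Adj (R.head hne).2.1 (R.getLast hne).2.1)
    (hmid : ∀ j (hj : j < R.length), 0 < j → j < R.length - 1 →
      ¬ Adj (R.get ⟨j, hj⟩).2.1 (R.getLast hne).2.1) :
    ∀ j (hj : j < R.length), 0 < j → j < R.length - 1 →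
      ∃ t, ((R.get ⟨j, hj⟩).1, (R.getLast hne).2.1, t) ∈ arrows :=
  stmt3_general R hR hne hmid
end
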